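/- Let k be a commutative ring and A a commutative k-algebra. Then: (1) for every p ∈ ℕ, every nonempty co-ideal Δ ⊆ ℕ^p, every D ∈ HS^p_k(A;Δ) and every δ ∈ End_k(A)[[s]]_Δ all of whose coefficients are k-derivations of A, the product D·δ·D* (computed in End_k(A)[[s]]_Δ) again has all of its coefficients in Der_k(A); (2) the system of maps Ad^p_Δ(D) : Der_k(A)[[s]]_Δ → Der_k(A)[[s]]_Δ, δ ↦ D·δ·D*, defines a left pre-HS-module structure on the A-module Der_k(A) over A/k: each Ad^p_Δ(D) is a k[[s]]_Δ-linear automorphism congruent to the identity modulo classes of series with zero constant term, the maps D ↦ Ad^p_Δ(D) are group homomorphisms, satisfy the Leibniz rule Ad^p_Δ(D)(a·δ) = D̃(a)·Ad^p_Δ(D)(δ) for a ∈ A[[s]]_Δ, and Ad^q_∇(φ•D) = φ•Ad^p_Δ(D) for every substitution map φ with constant coefficients. -/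
import Mathlib


open scoped Classical

namespace HS

/-- multi-indices in `ℕ^p` -/
abbrev MIdx (p : ℕ) := Fin p → ℕ

/-- the total weight `|α|` of a multi-index -/
def wt {p : ℕ} (α : MIdx p) : ℕ := ∑ i, α i

/-- a non-empty co-ideal of `ℕ^p` -/
def IsCoideal {p : ℕ} (Δ : Set (MIdx p)) : Prop :=
  Δ.Nonempty ∧ ∀ ⦃α : MIdx p⦄, α ∈ Δ → ∀ ⦃β : MIdx p⦄, β ≤ α → β ∈ Δ

/-- Convolution product of two power series, given by their coefficient families:
this is the multiplication of `R[[s]]_Δ` (in terms of representatives). -/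
def sconv {p : ℕ} {R : Type*} [NonUnitalNonAssocSemiring R] (f g : MIdx p → R) : MIdx p → R :=
  fun α => ∑ β ∈ Finset.Iic α, f β * g (α - β)

/-- Applying a series of linear operators to a series of module elements; for an
operator family `f`, `fapply f` is the induced `k[[s]]_Δ`-linear map `f̃ = ∑ f_β s^β`. -/
def fapply {p : ℕ} {k M N : Type*} [Semiring k] [AddCommMonoid M] [AddCommMonoid N]
    [Module k M] [Module k N] (f : MIdx p → (M →ₗ[k] N)) (m : MIdx p → M) : MIdx p → N :=
  fun α => ∑ β ∈ Finset.Iic α, f β (m (α - β))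

/-- a series of scalars acting on a series of module elements:
the module structure of `M[[s]]_Δ` over `A[[s]]_Δ` (in terms of representatives). -/
def smul' {p : ℕ} {A M : Type*} [Semiring A] [AddCommMonoid M] [Module A M]
    (a : MIdx p → A) (m : MIdx p → M) : MIdx p → M :=
  fun α => ∑ β ∈ Finset.Iic α, a β • m (α - β)

/-- the unit (delta) series `1` -/
def one' {p : ℕ} {R : Type*} [Zero R] [One R] : MIdx p → R :=
  fun α => if α = 0 then 1 else 0

/-- `D` is a `(p,Δ)`-variate Hasse–Schmidt derivation of `A` over `k`:
`D_0 = id` and the Leibniz rule `D_α(xy) = ∑_{β+γ=α} D_β(x) D_γ(y)` for `α ∈ Δ`. -/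
def IsHS (k A : Type*) [CommRing k] [CommRing A] [Algebra k A] {p : ℕ}
    (Δ : Set (MIdx p)) (D : MIdx p → Module.End k A) : Prop :=
  D 0 = 1 ∧ ∀ α ∈ Δ, ∀ x y : A,
    D α (x * y) = ∑ β ∈ Finset.Iic α, D β x * D (α - β) y

/-- A substitution map `φ : A[[s]]_Δ → A[[t]]_∇`, modelled by the family of its
coefficients `C α e = C_e(φ,α)` (the coefficient of `t^e` in `φ(s^α)`):
it is multiplicative on monomials, unital, of order `≥ 1` (so `C α e = 0` for
`|e| < |α|`), kills the classes of monomials `s^α` with `α ∉ Δ`, and is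
normalized to vanish outside `∇`. -/
structure SubstMap (A : Type*) [CommRing A] (p q : ℕ)
    (Δ : Set (MIdx p)) (nab : Set (MIdx q)) where
  C : MIdx p → MIdx q → A
  c_zero : ∀ e ∈ nab, C 0 e = if e = 0 then 1 else 0
  c_mul : ∀ α ∈ Δ, ∀ β ∈ Δ, ∀ e ∈ nab,
    C (α + β) e = ∑ u ∈ Finset.Iic e, C α u * C β (e - u)
  c_ord : ∀ α ∈ Δ, ∀ e ∈ nab, wt e < wt α → C α e = 0
  c_suppL : ∀ α : MIdx p, α ∉ Δ → ∀ e : MIdx q, C α e = 0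
  c_suppR : ∀ (α : MIdx p) (e : MIdx q), e ∉ nab → C α e = 0

variable {A' : Type*} [CommRing A'] {p' q' : ℕ} {Δ' : Set (MIdx p')} {nab' : Set (MIdx q')}

/-- the map `A[[s]]_Δ → A[[t]]_∇` induced by a substitution map -/
def SubstMap.app (φ : SubstMap A' p' q' Δ' nab') (f : MIdx p' → A') : MIdx q' → A' :=
  fun e => ∑ α ∈ Finset.Iic (fun _ => wt e : MIdx p'), φ.C α e * f α

/-- `φ • D` for a series of `k`-linear endomorphisms of `A` -/
def SubstMap.bulletEnd {k : Type*} [CommRing k] [Algebra k A']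
    (φ : SubstMap A' p' q' Δ' nab') (D : MIdx p' → Module.End k A') :
    MIdx q' → Module.End k A' :=
  fun e => ∑ α ∈ Finset.Iic (fun _ => wt e : MIdx p'), φ.C α e • D α

/-- `φ • r` for a series with coefficients in a `k`-algebra `S` over `A`
(with structural map `ι : A → S`) -/
def SubstMap.bulletS {S : Type*} [Ring S] (ι : A' → S)
    (φ : SubstMap A' p' q' Δ' nab') (r : MIdx p' → S) : MIdx q' → S :=
  fun e => ∑ α ∈ Finset.Iic (fun _ => wt e : MIdx p'), ι (φ.C α e) * r α

/-- `r • φ` for a series with coefficients in a `k`-algebra `S` over `A` -/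
def SubstMap.bulletSR {S : Type*} [Ring S] (ι : A' → S)
    (φ : SubstMap A' p' q' Δ' nab') (r : MIdx p' → S) : MIdx q' → S :=
  fun e => ∑ α ∈ Finset.Iic (fun _ => wt e : MIdx p'), r α * ι (φ.C α e)

/-- `φ • m` for a series with coefficients in an `A`-module `M` -/
def SubstMap.bulletM {M : Type*} [AddCommMonoid M] [Module A' M]
    (φ : SubstMap A' p' q' Δ' nab') (m : MIdx p' → M) : MIdx q' → M :=
  fun e => ∑ α ∈ Finset.Iic (fun _ => wt e : MIdx p'), φ.C α e • m α

/-- `φ` has constant coefficients, i.e. all the `C_e(φ,α)` come from `k` -/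
def SubstMap.HasConstCoeffs (k : Type*) [CommRing k] [Algebra k A']
    (φ : SubstMap A' p' q' Δ' nab') : Prop :=
  ∀ (α : MIdx p') (e : MIdx q'), φ.C α e ∈ Set.range (algebraMap k A')

/-- `f` is a `k`-derivation of `A` (as a `k`-linear endomorphism) -/
def IsDerEnd {k A : Type*} [CommRing k] [CommRing A] [Algebra k A]
    (f : Module.End k A) : Prop :=
  ∀ x y : A, f (x * y) = x * f y + y * f x

/-- the coefficient at `α` of the conjugation operator `Ad(D) : δ ↦ D·δ·D*`,
i.e. `Ad(D)_α(f) = ∑_{β+γ=α} D_β ∘ f ∘ D*_γ` -/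
def AdCoef {k A : Type*} [CommRing k] [CommRing A] [Algebra k A] {p : ℕ}
    (D Ds : MIdx p → Module.End k A) (α : MIdx p) (f : Module.End k A) :
    Module.End k A :=
  ∑ β ∈ Finset.Iic α, D β * f * Ds (α - β)

section Infra
variable {p : ℕ}

lemma mle {α β : MIdx p} (h : β ≤ α) (i : Fin p) : β i ≤ α i := h i

lemma midx_sub_le (α β : MIdx p) : α - β ≤ α := fun i => Nat.sub_le _ _

lemma midx_sub_sub_cancel {α β : MIdx p} (h : β ≤ α) : α - (α - β) = β := by
  funext i; have := mle h i; simp only [Pi.sub_apply]; omega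

lemma midx_add_sub_cancel {α β : MIdx p} (h : β ≤ α) : β + (α - β) = α := by
  funext i; have := mle h i; simp only [Pi.sub_apply, Pi.add_apply]; omega

/-- the key reindexing lemma for nested sums over `Iic` -/
lemma sum_Iic_pair {M : Type*} [AddCommMonoid M] (α : MIdx p) (F : MIdx p → MIdx p → M) :
    ∑ u ∈ Finset.Iic α, ∑ β ∈ Finset.Iic u, F β (u - β)
      = ∑ β ∈ Finset.Iic α, ∑ γ ∈ Finset.Iic (α - β), F β γ := by
  rw [Finset.sum_sigma', Finset.sum_sigma']
  refine Finset.sum_nbij' (fun x => ⟨x.2, x.1 - x.2⟩) (fun x => ⟨x.1 + x.2, x.1⟩) ?_ ?_ ?_ ?_ ?_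
  · rintro ⟨u, β⟩ h
    simp only [Finset.mem_sigma, Finset.mem_Iic] at h ⊢
    exact ⟨le_trans h.2 h.1, fun i => by
      have := mle h.1 i; have := mle h.2 i; simp only [Pi.sub_apply]; omega⟩
  · rintro ⟨β, γ⟩ h
    simp only [Finset.mem_sigma, Finset.mem_Iic] at h ⊢
    constructor
    · intro i
      have := mle h.1 i; have := mle h.2 i
      simp only [Pi.sub_apply, Pi.add_apply] at *; omega
    · intro i; simp only [Pi.add_apply]; omega
  · rintro ⟨u, β⟩ h
    simp only [Finset.mem_sigma, Finset.mem_Iic] at h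
    have : β + (u - β) = u := midx_add_sub_cancel h.2
    simp [this]
  · rintro ⟨β, γ⟩ h
    simp only [Finset.mem_sigma, Finset.mem_Iic] at h
    have : β + γ - β = γ := by funext i; simp only [Pi.sub_apply, Pi.add_apply]; omega
    simp [this]
  · rintro ⟨u, β⟩ h; rfl

lemma sum_Iic_comm {M : Type*} [AddCommMonoid M] (α : MIdx p) (F : MIdx p → MIdx p → M) :
    ∑ β ∈ Finset.Iic α, ∑ γ ∈ Finset.Iic (α - β), F β γ
      = ∑ γ ∈ Finset.Iic α, ∑ β ∈ Finset.Iic (α - γ), F β γ := by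
  refine Finset.sum_comm' ?_
  intro β γ
  simp only [Finset.mem_Iic]
  constructor
  · rintro ⟨h1, h2⟩
    exact ⟨fun i => by have := mle h1 i; have := mle h2 i; simp only [Pi.sub_apply] at *; omega,
           fun i => by have := mle h1 i; have := mle h2 i; simp only [Pi.sub_apply] at *; omega⟩
  · rintro ⟨h1, h2⟩
    exact ⟨fun i => by have := mle h1 i; have := mle h2 i; simp only [Pi.sub_apply] at *; omega,
           fun i => by have := mle h1 i; have := mle h2 i; simp only [Pi.sub_apply] at *; omega⟩

lemma sum_Iic_reflect {M : Type*} [AddCommMonoid M] (α : MIdx p) (F : MIdx p → M) :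
    ∑ u ∈ Finset.Iic α, F u = ∑ u ∈ Finset.Iic α, F (α - u) := by
  refine Finset.sum_nbij' (fun u => α - u) (fun u => α - u) ?_ ?_ ?_ ?_ ?_
  · intro u _; exact Finset.mem_Iic.2 (midx_sub_le _ _)
  · intro u _; exact Finset.mem_Iic.2 (midx_sub_le _ _)
  · intro u hu; exact midx_sub_sub_cancel (Finset.mem_Iic.1 hu)
  · intro u hu; exact midx_sub_sub_cancel (Finset.mem_Iic.1 hu)
  · intro u hu
    rw [midx_sub_sub_cancel (Finset.mem_Iic.1 hu)]

lemma Iic_zero_eq : (Finset.Iic (0 : MIdx p)) = {0} := by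
  ext β
  simp only [Finset.mem_Iic, Finset.mem_singleton]
  constructor
  · intro h; funext i; have := mle h i; simp only [Pi.zero_apply] at this ⊢; omega
  · rintro rfl; exact le_refl _

end Infra
section Series
variable {p : ℕ} {R : Type*}

/-- locality of `sconv` -/
lemma sconv_congr [NonUnitalNonAssocSemiring R] {f f' g g' : MIdx p → R} {α : MIdx p}
    (hf : ∀ β ≤ α, f β = f' β) (hg : ∀ β ≤ α, g β = g' β) :
    sconv f g α = sconv f' g' α := by
  unfold sconv
  refine Finset.sum_congr rfl fun β hβ => ?_
  rw [hf β (Finset.mem_Iic.1 hβ), hg _ (le_trans (midx_sub_le _ _) le_rfl)]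

/-- associativity of convolution (pointwise, global) -/
lemma sconv_assoc [NonUnitalSemiring R] (f g h : MIdx p → R) :
    sconv (sconv f g) h = sconv f (sconv g h) := by
  funext α
  unfold sconv
  calc ∑ u ∈ Finset.Iic α, (∑ β ∈ Finset.Iic u, f β * g (u - β)) * h (α - u)
      = ∑ u ∈ Finset.Iic α, ∑ β ∈ Finset.Iic u,
          f β * g (u - β) * h (α - (β + (u - β))) := by
        refine Finset.sum_congr rfl fun u hu => ?_
        rw [Finset.sum_mul]
        refine Finset.sum_congr rfl fun β hβ => ?_
        rw [midx_add_sub_cancel (Finset.mem_Iic.1 hβ)]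
    _ = ∑ β ∈ Finset.Iic α, ∑ γ ∈ Finset.Iic (α - β), f β * g γ * h (α - (β + γ)) :=
        sum_Iic_pair α (fun β γ => f β * g γ * h (α - (β + γ)))
    _ = ∑ β ∈ Finset.Iic α, f β * ∑ γ ∈ Finset.Iic (α - β), g γ * h (α - β - γ) := by
        refine Finset.sum_congr rfl fun β hβ => ?_
        rw [Finset.mul_sum]
        refine Finset.sum_congr rfl fun γ hγ => ?_
        rw [mul_assoc]
        have : α - (β + γ) = α - β - γ := by
          funext i; simp only [Pi.sub_apply, Pi.add_apply]; omega
        rw [this]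

lemma one'_sconv [NonAssocSemiring R] {f : MIdx p → R} {α : MIdx p}
    {e : MIdx p → R} (he : ∀ β ≤ α, e β = one' β) :
    sconv e f α = f α := by
  unfold sconv
  rw [Finset.sum_eq_single (0 : MIdx p)]
  · rw [he 0 (fun i => Nat.zero_le _), one']
    simp [one_mul]
  · intro β hβ hβ0
    rw [he β (Finset.mem_Iic.1 hβ), one', if_neg hβ0, zero_mul]
  · intro h
    exact absurd (Finset.mem_Iic.2 (fun i => Nat.zero_le _)) h

lemma sconv_one' [NonAssocSemiring R] {f : MIdx p → R} {α : MIdx p}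
    {e : MIdx p → R} (he : ∀ β ≤ α, e β = one' β) :
    sconv f e α = f α := by
  unfold sconv
  rw [Finset.sum_eq_single α]
  · rw [he (α - α) (midx_sub_le _ _), one']
    have : α - α = 0 := by funext i; simp only [Pi.sub_apply, Pi.zero_apply]; omega
    simp [this, mul_one]
  · intro β hβ hβα
    rw [he (α - β) (midx_sub_le _ _), one', if_neg, mul_zero]
    intro h0
    exact hβα ((midx_sub_sub_cancel (Finset.mem_Iic.1 hβ)).symm.trans (by rw [h0]; funext i; simp only [Pi.sub_apply, Pi.zero_apply]; omega))
  · intro h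
    exact absurd (Finset.mem_Iic.2 le_rfl) h

end Series
section Ends
variable {k A : Type*} [CommRing k] [CommRing A] [Algebra k A] {p : ℕ}

/-- the constant series -/
def cs (x : A) : MIdx p → A := fun β => if β = 0 then x else 0

/-- evaluation of a series of operators at an element -/
def ev (f : MIdx p → Module.End k A) (x : A) : MIdx p → A := fun γ => f γ x

lemma ev_sconv (F G : MIdx p → Module.End k A) (x : A) :
    ev (sconv F G) x = fapply F (ev G x) := by
  funext α
  unfold ev sconv fapply
  rw [LinearMap.sum_apply]
  rfl

lemma fapply_congr {f : MIdx p → Module.End k A} {m m' : MIdx p → A} {α : MIdx p}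
    (h : ∀ β ≤ α, m β = m' β) : fapply f m α = fapply f m' α := by
  unfold fapply
  exact Finset.sum_congr rfl fun β hβ => by rw [h _ (midx_sub_le _ _)]

lemma fapply_sconv (F G : MIdx p → Module.End k A) (m : MIdx p → A) :
    fapply (sconv F G) m = fapply F (fapply G m) := by
  funext α
  unfold fapply sconv
  calc ∑ u ∈ Finset.Iic α, (∑ β ∈ Finset.Iic u, F β * G (u - β)) (m (α - u))
      = ∑ u ∈ Finset.Iic α, ∑ β ∈ Finset.Iic u, F β (G (u - β) (m (α - (β + (u - β))))) := by
        refine Finset.sum_congr rfl fun u hu => ?_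
        rw [LinearMap.sum_apply]
        refine Finset.sum_congr rfl fun β hβ => ?_
        rw [midx_add_sub_cancel (Finset.mem_Iic.1 hβ)]
        rfl
    _ = ∑ β ∈ Finset.Iic α, ∑ γ ∈ Finset.Iic (α - β), F β (G γ (m (α - (β + γ)))) :=
        sum_Iic_pair α (fun β γ => F β (G γ (m (α - (β + γ)))))
    _ = ∑ β ∈ Finset.Iic α, F β (∑ γ ∈ Finset.Iic (α - β), G γ (m (α - β - γ))) := by
        refine Finset.sum_congr rfl fun β hβ => ?_
        rw [map_sum]
        refine Finset.sum_congr rfl fun γ hγ => ?_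
        have : α - (β + γ) = α - β - γ := by
          funext i; simp only [Pi.sub_apply, Pi.add_apply]; omega
        rw [this]

lemma fapply_add (f : MIdx p → Module.End k A) (m n : MIdx p → A) (α : MIdx p) :
    fapply f (fun β => m β + n β) α = fapply f m α + fapply f n α := by
  unfold fapply
  rw [← Finset.sum_add_distrib]
  exact Finset.sum_congr rfl fun β hβ => map_add _ _ _

lemma sconv_cs_left (x : A) (m : MIdx p → A) (α : MIdx p) :
    sconv (cs x) m α = x * m α := by
  unfold sconv cs
  rw [Finset.sum_eq_single (0 : MIdx p)]
  · have : α - 0 = α := by funext i; simp only [Pi.sub_apply, Pi.zero_apply]; omega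
    simp [this]
  · intro β hβ hβ0; simp [hβ0]
  · intro h; exact absurd (Finset.mem_Iic.2 (fun i => Nat.zero_le _)) h

lemma one'_apply_eq_cs (x : A) (γ : MIdx p) : (one' γ : Module.End k A) x = cs x γ := by
  unfold one' cs
  split <;> simp

lemma cs_mul (x y : A) : (cs (x * y) : MIdx p → A) = sconv (cs x) (cs y) := by
  funext α
  rw [sconv_cs_left]
  unfold cs
  split <;> simp

end Ends
section Steps
variable {k A : Type*} [CommRing k] [CommRing A] [Algebra k A] {p : ℕ}
  {Δ : Set (MIdx p)}

/-- Step A: a Hasse–Schmidt derivation is multiplicative at the level of series -/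
lemma hs_fapply_mul (hΔ : IsCoideal Δ) {D : MIdx p → Module.End k A}
    (hD : ∀ α ∈ Δ, ∀ x y : A, D α (x * y) = ∑ β ∈ Finset.Iic α, D β x * D (α - β) y)
    {α : MIdx p} (hα : α ∈ Δ) (x y : MIdx p → A) :
    fapply D (sconv x y) α = sconv (fapply D x) (fapply D y) α := by
  have hL : fapply D (sconv x y) α
      = ∑ γ ∈ Finset.Iic α, ∑ u ∈ Finset.Iic (α - γ), ∑ δ ∈ Finset.Iic (α - γ - u),
          D γ (x u) * D δ (y (α - γ - u - δ)) := by
    unfold fapply sconv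
    calc ∑ β ∈ Finset.Iic α, D β (∑ u ∈ Finset.Iic (α - β), x u * y (α - β - u))
        = ∑ β ∈ Finset.Iic α, ∑ γ ∈ Finset.Iic β, ∑ u ∈ Finset.Iic (α - β),
            D γ (x u) * D (β - γ) (y (α - β - u)) := by
          refine Finset.sum_congr rfl fun β hβ => ?_
          rw [map_sum]
          rw [Finset.sum_congr rfl (fun u _ =>
            hD β (hΔ.2 hα (Finset.mem_Iic.1 hβ)) (x u) (y (α - β - u)))]
          exact Finset.sum_comm
      _ = ∑ β ∈ Finset.Iic α, ∑ γ ∈ Finset.Iic β,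
            (fun γ' δ' => ∑ u ∈ Finset.Iic (α - γ' - δ'),
              D γ' (x u) * D δ' (y (α - γ' - δ' - u))) γ (β - γ) := by
          refine Finset.sum_congr rfl fun β hβ => Finset.sum_congr rfl fun γ hγ => ?_
          have hβα := Finset.mem_Iic.1 hβ
          have hγβ := Finset.mem_Iic.1 hγ
          have h1 : α - γ - (β - γ) = α - β := by
            funext i; have := mle hβα i; have := mle hγβ i
            simp only [Pi.sub_apply] at *; omega
          simp only [h1]
      _ = ∑ γ ∈ Finset.Iic α, ∑ δ ∈ Finset.Iic (α - γ),
            (fun γ' δ' => ∑ u ∈ Finset.Iic (α - γ' - δ'),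
              D γ' (x u) * D δ' (y (α - γ' - δ' - u))) γ δ :=
          sum_Iic_pair α (fun γ' δ' => ∑ u ∈ Finset.Iic (α - γ' - δ'),
              D γ' (x u) * D δ' (y (α - γ' - δ' - u)))
      _ = ∑ γ ∈ Finset.Iic α, ∑ u ∈ Finset.Iic (α - γ), ∑ δ ∈ Finset.Iic (α - γ - u),
            D γ (x u) * D δ (y (α - γ - u - δ)) := by
          refine Finset.sum_congr rfl fun γ _ => ?_
          rw [sum_Iic_comm (α - γ) (fun δ u => D γ (x u) * D δ (y (α - γ - δ - u)))]
          refine Finset.sum_congr rfl fun u _ => Finset.sum_congr rfl fun δ _ => ?_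
          have h2 : α - γ - δ - u = α - γ - u - δ := by
            funext i; simp only [Pi.sub_apply]; omega
          rw [h2]
  have hR : sconv (fapply D x) (fapply D y) α
      = ∑ γ ∈ Finset.Iic α, ∑ u ∈ Finset.Iic (α - γ), ∑ δ ∈ Finset.Iic (α - γ - u),
          D γ (x u) * D δ (y (α - γ - u - δ)) := by
    unfold fapply sconv
    calc ∑ w ∈ Finset.Iic α, (∑ γ ∈ Finset.Iic w, D γ (x (w - γ))) *
            (∑ δ ∈ Finset.Iic (α - w), D δ (y (α - w - δ)))
        = ∑ w ∈ Finset.Iic α, ∑ γ ∈ Finset.Iic w,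
            (fun γ' u' => ∑ δ ∈ Finset.Iic (α - γ' - u'),
              D γ' (x u') * D δ (y (α - γ' - u' - δ))) γ (w - γ) := by
          refine Finset.sum_congr rfl fun w hw => ?_
          rw [Finset.sum_mul]
          refine Finset.sum_congr rfl fun γ hγ => ?_
          rw [Finset.mul_sum]
          have hwα := Finset.mem_Iic.1 hw
          have hγw := Finset.mem_Iic.1 hγ
          have h1 : α - γ - (w - γ) = α - w := by
            funext i; have := mle hwα i; have := mle hγw i
            simp only [Pi.sub_apply] at *; omega
          simp only [h1]
      _ = ∑ γ ∈ Finset.Iic α, ∑ u ∈ Finset.Iic (α - γ),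
            (fun γ' u' => ∑ δ ∈ Finset.Iic (α - γ' - u'),
              D γ' (x u') * D δ (y (α - γ' - u' - δ))) γ u :=
          sum_Iic_pair α (fun γ' u' => ∑ δ ∈ Finset.Iic (α - γ' - u'),
              D γ' (x u') * D δ (y (α - γ' - u' - δ)))
  rw [hL, hR]

/-- Step B: a series with derivation coefficients satisfies the Leibniz rule on series -/
lemma der_fapply_leibniz (hΔ : IsCoideal Δ) {δ : MIdx p → Module.End k A}
    (hδ : ∀ γ ∈ Δ, IsDerEnd (δ γ))
    {α : MIdx p} (hα : α ∈ Δ) (x y : MIdx p → A) :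
    fapply δ (sconv x y) α = sconv x (fapply δ y) α + sconv y (fapply δ x) α := by
  unfold fapply sconv
  calc ∑ β ∈ Finset.Iic α, δ β (∑ u ∈ Finset.Iic (α - β), x u * y (α - β - u))
      = ∑ β ∈ Finset.Iic α, ∑ u ∈ Finset.Iic (α - β),
          (x u * δ β (y (α - β - u)) + y (α - β - u) * δ β (x u)) := by
        refine Finset.sum_congr rfl fun β hβ => ?_
        rw [map_sum]
        exact Finset.sum_congr rfl fun u _ =>
          hδ β (hΔ.2 hα (Finset.mem_Iic.1 hβ)) (x u) (y (α - β - u))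
    _ = (∑ β ∈ Finset.Iic α, ∑ u ∈ Finset.Iic (α - β), x u * δ β (y (α - β - u)))
        + ∑ β ∈ Finset.Iic α, ∑ u ∈ Finset.Iic (α - β), y (α - β - u) * δ β (x u) := by
        rw [← Finset.sum_add_distrib]
        exact Finset.sum_congr rfl fun β _ => Finset.sum_add_distrib
    _ = (∑ u ∈ Finset.Iic α, x u * ∑ β ∈ Finset.Iic (α - u), δ β (y (α - u - β)))
        + ∑ v ∈ Finset.Iic α, y v * ∑ β ∈ Finset.Iic (α - v), δ β (x (α - v - β)) := by
        congr 1
        · rw [sum_Iic_comm α (fun β u => x u * δ β (y (α - β - u)))]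
          refine Finset.sum_congr rfl fun u _ => ?_
          rw [Finset.mul_sum]
          refine Finset.sum_congr rfl fun β _ => ?_
          have h2 : α - β - u = α - u - β := by
            funext i; simp only [Pi.sub_apply]; omega
          rw [h2]
        · calc ∑ β ∈ Finset.Iic α, ∑ u ∈ Finset.Iic (α - β), y (α - β - u) * δ β (x u)
              = ∑ β ∈ Finset.Iic α, ∑ v ∈ Finset.Iic (α - β), y v * δ β (x (α - β - v)) := by
                refine Finset.sum_congr rfl fun β _ => ?_
                rw [sum_Iic_reflect (α - β) (fun u => y (α - β - u) * δ β (x u))]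
                refine Finset.sum_congr rfl fun v hv => ?_
                rw [midx_sub_sub_cancel (Finset.mem_Iic.1 hv)]
            _ = ∑ v ∈ Finset.Iic α, ∑ β ∈ Finset.Iic (α - v), y v * δ β (x (α - v - β)) := by
                rw [sum_Iic_comm α (fun β v => y v * δ β (x (α - β - v)))]
                refine Finset.sum_congr rfl fun v _ => Finset.sum_congr rfl fun β _ => ?_
                have h2 : α - β - v = α - v - β := by
                  funext i; simp only [Pi.sub_apply]; omega
                rw [h2]
            _ = ∑ v ∈ Finset.Iic α, y v * ∑ β ∈ Finset.Iic (α - v), δ β (x (α - v - β)) := by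
                exact Finset.sum_congr rfl fun v _ => (Finset.mul_sum _ _ _).symm

end Steps
section Smul
variable {k A : Type*} [CommRing k] [CommRing A] [Algebra k A] {p : ℕ}

lemma sconv_zero {R : Type*} [NonUnitalNonAssocSemiring R] (f g : MIdx p → R) :
    sconv f g 0 = f 0 * g 0 := by
  unfold sconv
  rw [Iic_zero_eq, Finset.sum_singleton]
  have h0 : (0 : MIdx p) - 0 = 0 := by funext i; simp
  rw [h0]

lemma sconv_add_left {R : Type*} [NonUnitalNonAssocSemiring R] (f g h : MIdx p → R) :
    sconv (f + g) h = (fun α => sconv f h α + sconv g h α) := by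
  funext α
  unfold sconv
  rw [← Finset.sum_add_distrib]
  exact Finset.sum_congr rfl fun β _ => by rw [Pi.add_apply, add_mul]

lemma sconv_add_right {R : Type*} [NonUnitalNonAssocSemiring R] (f g h : MIdx p → R) :
    sconv f (fun α => g α + h α) = (fun α => sconv f g α + sconv f h α) := by
  funext α
  unfold sconv
  rw [← Finset.sum_add_distrib]
  exact Finset.sum_congr rfl fun β _ => by rw [mul_add]

lemma sconv_smulk_left {S R : Type*} [CommSemiring S] [Semiring R] [Algebra S R]
    (c : MIdx p → S) (f g : MIdx p → R) :
    sconv (smul' c f) g = smul' c (sconv f g) := by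
  funext α
  unfold sconv smul'
  calc ∑ β ∈ Finset.Iic α, (∑ u ∈ Finset.Iic β, c u • f (β - u)) * g (α - β)
      = ∑ β ∈ Finset.Iic α, ∑ u ∈ Finset.Iic β,
          (fun u' v' => c u' • (f v' * g (α - u' - v'))) u (β - u) := by
        refine Finset.sum_congr rfl fun β hβ => ?_
        rw [Finset.sum_mul]
        refine Finset.sum_congr rfl fun u hu => ?_
        rw [smul_mul_assoc]
        have h1 : α - u - (β - u) = α - β := by
          funext i
          have := mle (Finset.mem_Iic.1 hβ) i; have := mle (Finset.mem_Iic.1 hu) i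
          simp only [Pi.sub_apply] at *; omega
        simp only [h1]
    _ = ∑ u ∈ Finset.Iic α, ∑ v ∈ Finset.Iic (α - u), c u • (f v * g (α - u - v)) :=
        sum_Iic_pair α (fun u' v' => c u' • (f v' * g (α - u' - v')))
    _ = ∑ u ∈ Finset.Iic α, c u • ∑ v ∈ Finset.Iic (α - u), f v * g (α - u - v) := by
        exact Finset.sum_congr rfl fun u _ => (Finset.smul_sum).symm

lemma sconv_smulk_right {S R : Type*} [CommSemiring S] [Semiring R] [Algebra S R]
    (c : MIdx p → S) (f g : MIdx p → R) :
    sconv f (smul' c g) = smul' c (sconv f g) := by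
  funext α
  unfold sconv smul'
  calc ∑ β ∈ Finset.Iic α, f β * ∑ u ∈ Finset.Iic (α - β), c u • g (α - β - u)
      = ∑ β ∈ Finset.Iic α, ∑ u ∈ Finset.Iic (α - β), c u • (f β * g (α - β - u)) := by
        refine Finset.sum_congr rfl fun β _ => ?_
        rw [Finset.mul_sum]
        exact Finset.sum_congr rfl fun u _ => (mul_smul_comm _ _ _)
    _ = ∑ u ∈ Finset.Iic α, ∑ β ∈ Finset.Iic (α - u), c u • (f β * g (α - β - u)) :=
        sum_Iic_comm α (fun β u => c u • (f β * g (α - β - u)))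
    _ = ∑ u ∈ Finset.Iic α, c u • ∑ β ∈ Finset.Iic (α - u), f β * g (α - u - β) := by
        refine Finset.sum_congr rfl fun u _ => ?_
        rw [Finset.smul_sum]
        refine Finset.sum_congr rfl fun β _ => ?_
        have h1 : α - β - u = α - u - β := by
          funext i; simp only [Pi.sub_apply]; omega
        rw [h1]

lemma ev_smul' (a : MIdx p → A) (δ : MIdx p → Module.End k A) (x : A) :
    ev (smul' a δ) x = sconv a (ev δ x) := by
  funext β
  unfold ev smul' sconv
  rw [LinearMap.sum_apply]
  exact Finset.sum_congr rfl fun u _ => by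
    rw [LinearMap.smul_apply, smul_eq_mul]

lemma fapply_smul' (a : MIdx p → A) (δ : MIdx p → Module.End k A) (z : MIdx p → A) :
    fapply (smul' a δ) z = sconv a (fapply δ z) := by
  funext γ
  unfold fapply smul' sconv
  calc ∑ β ∈ Finset.Iic γ, (∑ u ∈ Finset.Iic β, a u • δ (β - u)) (z (γ - β))
      = ∑ β ∈ Finset.Iic γ, ∑ u ∈ Finset.Iic β,
          (fun u' v' => a u' * δ v' (z (γ - u' - v'))) u (β - u) := by
        refine Finset.sum_congr rfl fun β hβ => ?_
        rw [LinearMap.sum_apply]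
        refine Finset.sum_congr rfl fun u hu => ?_
        have h1 : γ - u - (β - u) = γ - β := by
          funext i
          have := mle (Finset.mem_Iic.1 hβ) i; have := mle (Finset.mem_Iic.1 hu) i
          simp only [Pi.sub_apply] at *; omega
        simp only [h1, LinearMap.smul_apply, smul_eq_mul]
    _ = ∑ u ∈ Finset.Iic γ, ∑ v ∈ Finset.Iic (γ - u), a u * δ v (z (γ - u - v)) :=
        sum_Iic_pair γ (fun u' v' => a u' * δ v' (z (γ - u' - v')))
    _ = ∑ u ∈ Finset.Iic γ, a u * ∑ v ∈ Finset.Iic (γ - u), δ v (z (γ - u - v)) := by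
        exact Finset.sum_congr rfl fun u _ => (Finset.mul_sum _ _ _).symm

end Smul
section Part1
variable {k A : Type*} [CommRing k] [CommRing A] [Algebra k A] {p : ℕ}
  {Δ : Set (MIdx p)}

lemma ev_triple (D δ Ds : MIdx p → Module.End k A) (z : A) :
    ev (sconv D (sconv δ Ds)) z = fapply D (fapply δ (ev Ds z)) := by
  rw [ev_sconv, ev_sconv]

lemma DDs_ev {D Ds : MIdx p → Module.End k A} {α : MIdx p}
    (hinv : ∀ β ≤ α, sconv D Ds β = one' β) (x : A) :
    ∀ γ ≤ α, fapply D (ev Ds x) γ = cs x γ := by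
  intro γ hγ
  have h1 : fapply D (ev Ds x) γ = ev (sconv D Ds) x γ := (congrFun (ev_sconv D Ds x) γ).symm
  rw [h1]
  show (sconv D Ds γ) x = _
  rw [hinv γ hγ]
  exact one'_apply_eq_cs x γ

lemma part1 (hΔ : IsCoideal Δ) {D Ds : MIdx p → Module.End k A}
    (hD : IsHS k A Δ D) (hDs : IsHS k A Δ Ds)
    (hDDs : ∀ α ∈ Δ, sconv D Ds α = (one' : MIdx p → Module.End k A) α)
    (δ : MIdx p → Module.End k A) (hδ : ∀ γ ∈ Δ, IsDerEnd (δ γ))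
    {α : MIdx p} (hα : α ∈ Δ) :
    IsDerEnd (sconv D (sconv δ Ds) α) := by
  intro x y
  set X := ev Ds x with hX
  set Y := ev Ds y with hY
  have hev : ∀ z : A, (sconv D (sconv δ Ds) α) z = fapply D (fapply δ (ev Ds z)) α :=
    fun z => congrFun (ev_triple D δ Ds z) α
  rw [hev (x * y), hev, hev]
  have step1 : ∀ β ≤ α, fapply δ (ev Ds (x * y)) β
      = sconv X (fapply δ Y) β + sconv Y (fapply δ X) β := by
    intro β hβ
    have hβΔ : β ∈ Δ := hΔ.2 hα hβ
    have h1 : fapply δ (ev Ds (x * y)) β = fapply δ (sconv X Y) β := by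
      refine fapply_congr fun γ hγ => ?_
      show Ds γ (x * y) = _
      rw [hDs.2 γ (hΔ.2 hβΔ hγ) x y]
      rfl
    rw [h1]
    exact der_fapply_leibniz hΔ hδ hβΔ X Y
  have h2 : fapply D (fapply δ (ev Ds (x * y))) α
      = fapply D (fun β => sconv X (fapply δ Y) β + sconv Y (fapply δ X) β) α :=
    fapply_congr fun β hβ => step1 β hβ
  rw [h2, fapply_add]
  have h3 : fapply D (fun β => sconv X (fapply δ Y) β) α
      = x * fapply D (fapply δ Y) α := by
    have hA : fapply D (sconv X (fapply δ Y)) α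
        = sconv (fapply D X) (fapply D (fapply δ Y)) α :=
      hs_fapply_mul hΔ hD.2 hα X (fapply δ Y)
    have hcs : sconv (fapply D X) (fapply D (fapply δ Y)) α
        = sconv (cs x) (fapply D (fapply δ Y)) α :=
      sconv_congr (fun β hβ => DDs_ev (fun γ hγ => hDDs γ (hΔ.2 hα hγ)) x β hβ)
        (fun β _ => rfl)
    calc fapply D (fun β => sconv X (fapply δ Y) β) α
        = fapply D (sconv X (fapply δ Y)) α := rfl
      _ = sconv (cs x) (fapply D (fapply δ Y)) α := by rw [hA, hcs]
      _ = x * fapply D (fapply δ Y) α := sconv_cs_left _ _ _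
  have h4 : fapply D (fun β => sconv Y (fapply δ X) β) α
      = y * fapply D (fapply δ X) α := by
    have hA : fapply D (sconv Y (fapply δ X)) α
        = sconv (fapply D Y) (fapply D (fapply δ X)) α :=
      hs_fapply_mul hΔ hD.2 hα Y (fapply δ X)
    have hcs : sconv (fapply D Y) (fapply D (fapply δ X)) α
        = sconv (cs y) (fapply D (fapply δ X)) α :=
      sconv_congr (fun β hβ => DDs_ev (fun γ hγ => hDDs γ (hΔ.2 hα hγ)) y β hβ)
        (fun β _ => rfl)
    calc fapply D (fun β => sconv Y (fapply δ X) β) α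
        = fapply D (sconv Y (fapply δ X)) α := rfl
      _ = sconv (cs y) (fapply D (fapply δ X)) α := by rw [hA, hcs]
      _ = y * fapply D (fapply δ X) α := sconv_cs_left _ _ _
  rw [h3, h4]

end Part1
section Subst
variable {k A : Type*} [CommRing k] [CommRing A] [Algebra k A] {p q : ℕ}
  {Δ : Set (MIdx p)} {nab : Set (MIdx q)}

lemma wt_mono {α β : MIdx p} (h : α ≤ β) : wt α ≤ wt β :=
  Finset.sum_le_sum (fun i _ => mle h i)

lemma component_le_wt (α : MIdx p) (i : Fin p) : α i ≤ wt α :=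
  Finset.single_le_sum (fun j _ => Nat.zero_le _) (Finset.mem_univ i)

lemma end_smulA_mul (a : A) (F G : Module.End k A) : (a • F) * G = a • (F * G) :=
  LinearMap.ext fun _ => rfl

lemma end_mul_smul_const {b : A} (hb : b ∈ Set.range (algebraMap k A))
    (F G : Module.End k A) : F * (b • G) = b • (F * G) := by
  obtain ⟨c, rfl⟩ := hb
  refine LinearMap.ext fun x => ?_
  show F ((algebraMap k A c • G) x) = (algebraMap k A c • (F * G)) x
  rw [LinearMap.smul_apply, LinearMap.smul_apply, algebraMap_smul, algebraMap_smul,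
    map_smul]
  rfl

variable (φ : SubstMap A p q Δ nab)

/-- vanishing of coefficients outside the box -/
lemma C_vanish (hΔ : IsCoideal Δ) {u : MIdx q} (hu : u ∈ nab) {γ : MIdx p}
    (hγ : ¬ γ ≤ (fun _ => wt u : MIdx p)) : φ.C γ u = 0 := by
  by_cases hγΔ : γ ∈ Δ
  · refine φ.c_ord γ hγΔ u hu ?_
    obtain ⟨i, hi⟩ : ∃ i, wt u < γ i := by
      by_contra hc
      push_neg at hc
      exact hγ (fun i => hc i)
    exact lt_of_lt_of_le hi (component_le_wt γ i)
  · exact φ.c_suppL γ hγΔ u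

lemma C_mul' (hΔ : IsCoideal Δ) {e : MIdx q} (he : e ∈ nab) (γ δ' : MIdx p) :
    ∑ u ∈ Finset.Iic e, φ.C γ u * φ.C δ' (e - u) = φ.C (γ + δ') e := by
  by_cases hγ : γ ∈ Δ
  · by_cases hδ : δ' ∈ Δ
    · exact (φ.c_mul γ hγ δ' hδ e he).symm
    · rw [φ.c_suppL (γ + δ') (fun hmem => hδ (hΔ.2 hmem (fun i => Nat.le_add_left _ _))) e]
      exact Finset.sum_eq_zero fun u _ => by rw [φ.c_suppL δ' hδ, mul_zero]
  · rw [φ.c_suppL (γ + δ') (fun hmem => hγ (hΔ.2 hmem (fun i => Nat.le_add_right _ _))) e]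
    exact Finset.sum_eq_zero fun u _ => by rw [φ.c_suppL γ hγ, zero_mul]

lemma part2g_step1 (hΔ : IsCoideal Δ) (hnab : IsCoideal nab)
    (hc : φ.HasConstCoeffs k) (D Ds : MIdx p → Module.End k A)
    (f : Module.End k A) {e u : MIdx q} (he : e ∈ nab) (hue : u ≤ e) :
    (∑ α ∈ Finset.Iic (fun _ => wt u : MIdx p), φ.C α u • D α) * f *
      (∑ β ∈ Finset.Iic (fun _ => wt (e - u) : MIdx p), φ.C β (e - u) • Ds β)
    = ∑ γ ∈ Finset.Iic (fun _ => wt e : MIdx p),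
        ∑ δ' ∈ Finset.Iic (fun _ => wt e : MIdx p),
          (φ.C γ u * φ.C δ' (e - u)) • (D γ * f * Ds δ') := by
  have hunab : u ∈ nab := hnab.2 he hue
  have heunab : e - u ∈ nab := hnab.2 he (midx_sub_le _ _)
  have ext1 : (∑ α ∈ Finset.Iic (fun _ => wt u : MIdx p), φ.C α u • D α)
      = ∑ α ∈ Finset.Iic (fun _ => wt e : MIdx p), φ.C α u • D α := by
    refine Finset.sum_subset (Finset.Iic_subset_Iic.2 (fun i => wt_mono hue)) ?_
    intro γ _ hγ
    rw [C_vanish φ hΔ hunab (fun hle => hγ (Finset.mem_Iic.2 hle)), zero_smul]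
  have ext2 : (∑ β ∈ Finset.Iic (fun _ => wt (e - u) : MIdx p), φ.C β (e - u) • Ds β)
      = ∑ β ∈ Finset.Iic (fun _ => wt e : MIdx p), φ.C β (e - u) • Ds β := by
    refine Finset.sum_subset
      (Finset.Iic_subset_Iic.2 (fun i => wt_mono (midx_sub_le _ _))) ?_
    intro γ _ hγ
    rw [C_vanish φ hΔ heunab (fun hle => hγ (Finset.mem_Iic.2 hle)), zero_smul]
  rw [ext1, ext2, Finset.sum_mul, Finset.sum_mul]
  refine Finset.sum_congr rfl fun γ _ => ?_
  rw [Finset.mul_sum]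
  refine Finset.sum_congr rfl fun δ' _ => ?_
  rw [end_smulA_mul, end_smulA_mul, end_mul_smul_const (hc δ' (e - u)), smul_smul]

lemma part2g_L (hΔ : IsCoideal Δ) (hnab : IsCoideal nab)
    (hc : φ.HasConstCoeffs k) (D Ds : MIdx p → Module.End k A)
    (f : Module.End k A) {e : MIdx q} (he : e ∈ nab) :
    AdCoef (φ.bulletEnd D) (φ.bulletEnd Ds) e f
      = ∑ γ ∈ Finset.Iic (fun _ => wt e : MIdx p),
          ∑ δ' ∈ Finset.Iic (fun _ => wt e : MIdx p),
            φ.C (γ + δ') e • (D γ * f * Ds δ') := by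
  unfold AdCoef SubstMap.bulletEnd
  rw [Finset.sum_congr rfl (fun u hu =>
    part2g_step1 φ hΔ hnab hc D Ds f he (Finset.mem_Iic.1 hu))]
  rw [Finset.sum_comm]
  refine Finset.sum_congr rfl fun γ _ => ?_
  rw [Finset.sum_comm]
  refine Finset.sum_congr rfl fun δ' _ => ?_
  rw [← Finset.sum_smul, C_mul' φ hΔ he]

lemma part2g_R (hΔ : IsCoideal Δ)
    (D Ds : MIdx p → Module.End k A)
    (f : Module.End k A) {e : MIdx q} (he : e ∈ nab) :
    (∑ α ∈ Finset.Iic (fun _ => wt e : MIdx p), φ.C α e • AdCoef D Ds α f)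
      = ∑ γ ∈ Finset.Iic (fun _ => wt e : MIdx p),
          ∑ δ' ∈ Finset.Iic (fun _ => wt e : MIdx p),
            φ.C (γ + δ') e • (D γ * f * Ds δ') := by
  unfold AdCoef
  calc ∑ α ∈ Finset.Iic (fun _ => wt e : MIdx p),
          φ.C α e • ∑ γ ∈ Finset.Iic α, D γ * f * Ds (α - γ)
      = ∑ α ∈ Finset.Iic (fun _ => wt e : MIdx p), ∑ γ ∈ Finset.Iic α,
          (fun γ' δ' => φ.C (γ' + δ') e • (D γ' * f * Ds δ')) γ (α - γ) := by
        refine Finset.sum_congr rfl fun α hα => ?_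
        rw [Finset.smul_sum]
        refine Finset.sum_congr rfl fun γ hγ => ?_
        simp only [midx_add_sub_cancel (Finset.mem_Iic.1 hγ)]
    _ = ∑ γ ∈ Finset.Iic (fun _ => wt e : MIdx p),
          ∑ δ' ∈ Finset.Iic ((fun _ => wt e : MIdx p) - γ),
            φ.C (γ + δ') e • (D γ * f * Ds δ') :=
        sum_Iic_pair _ (fun γ' δ' => φ.C (γ' + δ') e • (D γ' * f * Ds δ'))
    _ = ∑ γ ∈ Finset.Iic (fun _ => wt e : MIdx p),
          ∑ δ' ∈ Finset.Iic (fun _ => wt e : MIdx p),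
            φ.C (γ + δ') e • (D γ * f * Ds δ') := by
        refine Finset.sum_congr rfl fun γ hγ => ?_
        refine Finset.sum_subset (Finset.Iic_subset_Iic.2 (midx_sub_le _ _)) ?_
        intro δ' hδ'B hδ'
        have hγm := Finset.mem_Iic.1 hγ
        have hnle : ¬ (γ + δ') ≤ (fun _ => wt e : MIdx p) := by
          intro hle
          refine hδ' (Finset.mem_Iic.2 (fun i => ?_))
          have h1 := mle hle i
          have h2 := mle hγm i
          simp only [Pi.add_apply, Pi.sub_apply] at *
          omega
        rw [C_vanish φ hΔ he hnle, zero_smul]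

lemma part2g (hΔ : IsCoideal Δ) (hnab : IsCoideal nab)
    (hc : φ.HasConstCoeffs k) (D Ds : MIdx p → Module.End k A)
    (f : Module.End k A) {e : MIdx q} (he : e ∈ nab) :
    AdCoef (φ.bulletEnd D) (φ.bulletEnd Ds) e f
      = ∑ α ∈ Finset.Iic (fun _ => wt e : MIdx p), φ.C α e • AdCoef D Ds α f := by
  rw [part2g_L φ hΔ hnab hc D Ds f he, part2g_R φ hΔ D Ds f he]

end Subst

/-- (1) For every `D ∈ HS^p_k(A;Δ)` (with inverse `D*`) and every
series `δ ∈ End_k(A)[[s]]_Δ` whose coefficients on `Δ` are `k`-derivations, the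
coefficients of `D·δ·D*` on `Δ` are again `k`-derivations.  (2) The conjugation
operators `Ad^p_Δ(D) : δ ↦ D·δ·D*` define a left pre-HS-module structure on
`Der_k(A)` over `A/k`: they are `k[[s]]_Δ`-linear automorphisms congruent to the
identity, `D ↦ Ad^p_Δ(D)` is a group homomorphism, the Leibniz rule
`Ad^p_Δ(D)(a·δ) = D̃(a)·Ad^p_Δ(D)(δ)` holds, and `Ad^q_∇(φ•D) = φ•Ad^p_Δ(D)` for
every substitution map `φ` with constant coefficients. -/
theorem stmt13 (k A : Type*) [CommRing k] [CommRing A] [Algebra k A]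
    (p : ℕ) (Δ : Set (MIdx p)) (hΔ : IsCoideal Δ) :
    -- (1)
    (∀ D Ds : MIdx p → Module.End k A, IsHS k A Δ D → IsHS k A Δ Ds →
      (∀ α ∈ Δ, sconv D Ds α = (one' : MIdx p → Module.End k A) α) →
      (∀ α ∈ Δ, sconv Ds D α = (one' : MIdx p → Module.End k A) α) →
      ∀ δ : MIdx p → Module.End k A, (∀ γ ∈ Δ, IsDerEnd (δ γ)) →
        ∀ α ∈ Δ, IsDerEnd (sconv D (sconv δ Ds) α))
    -- (2)
    ∧ (∀ D Ds : MIdx p → Module.End k A, IsHS k A Δ D → IsHS k A Δ Ds →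
      (∀ α ∈ Δ, sconv D Ds α = (one' : MIdx p → Module.End k A) α) →
      (∀ α ∈ Δ, sconv Ds D α = (one' : MIdx p → Module.End k A) α) →
      -- `Ad^p_Δ(D)` is congruent to the identity modulo `⟨s⟩`
      (∀ δ : MIdx p → Module.End k A, (∀ γ ∈ Δ, IsDerEnd (δ γ)) →
        sconv D (sconv δ Ds) 0 = δ 0)
      -- `Ad^p_Δ(D)` is additive
      ∧ (∀ δ δ' : MIdx p → Module.End k A,
          (∀ γ ∈ Δ, IsDerEnd (δ γ)) → (∀ γ ∈ Δ, IsDerEnd (δ' γ)) →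
          ∀ α ∈ Δ, sconv D (sconv (δ + δ') Ds) α
            = sconv D (sconv δ Ds) α + sconv D (sconv δ' Ds) α)
      -- `Ad^p_Δ(D)` is `k[[s]]_Δ`-linear
      ∧ (∀ (c : MIdx p → k) (δ : MIdx p → Module.End k A), (∀ γ ∈ Δ, IsDerEnd (δ γ)) →
          ∀ α ∈ Δ, sconv D (sconv (smul' c δ) Ds) α = smul' c (sconv D (sconv δ Ds)) α)
      -- `Ad^p_Δ(D)` is an automorphism, with inverse `Ad^p_Δ(D*)`
      ∧ (∀ δ : MIdx p → Module.End k A, (∀ γ ∈ Δ, IsDerEnd (δ γ)) →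
          ∀ α ∈ Δ, sconv Ds (sconv (sconv D (sconv δ Ds)) D) α = δ α
            ∧ sconv D (sconv (sconv Ds (sconv δ D)) Ds) α = δ α)
      -- the Leibniz rule `Ad^p_Δ(D)(a·δ) = D̃(a)·Ad^p_Δ(D)(δ)`
      ∧ (∀ (a : MIdx p → A) (δ : MIdx p → Module.End k A), (∀ γ ∈ Δ, IsDerEnd (δ γ)) →
          ∀ α ∈ Δ, sconv D (sconv (smul' a δ) Ds) α
            = smul' (fapply D a) (sconv D (sconv δ Ds)) α)
      -- `D ↦ Ad^p_Δ(D)` is a group homomorphism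
      ∧ (∀ E Es : MIdx p → Module.End k A, IsHS k A Δ E → IsHS k A Δ Es →
          (∀ α ∈ Δ, sconv E Es α = (one' : MIdx p → Module.End k A) α) →
          (∀ α ∈ Δ, sconv Es E α = (one' : MIdx p → Module.End k A) α) →
          ∀ δ : MIdx p → Module.End k A, (∀ γ ∈ Δ, IsDerEnd (δ γ)) →
          ∀ α ∈ Δ, sconv (sconv D E) (sconv δ (sconv Es Ds)) α
            = sconv D (sconv (sconv E (sconv δ Es)) Ds) α)
      -- `Ad^q_∇(φ•D) = φ • Ad^p_Δ(D)` for substitution maps with constant coefficients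
      ∧ (∀ (q : ℕ) (nab : Set (MIdx q)), IsCoideal nab →
          ∀ φ : SubstMap A p q Δ nab, φ.HasConstCoeffs k →
          ∀ f : Module.End k A, IsDerEnd f →
          ∀ e ∈ nab, AdCoef (φ.bulletEnd D) (φ.bulletEnd Ds) e f
            = ∑ α ∈ Finset.Iic (fun _ => wt e : MIdx p), φ.C α e • AdCoef D Ds α f)) := by
  constructor
  · -- part (1)
    intro D Ds hD hDs hDDs _hDsD δ hδ α hα
    exact part1 hΔ hD hDs hDDs δ hδ hα
  · intro D Ds hD hDs hDDs hDsD
    refine ⟨?_, ?_, ?_, ?_, ?_, ?_, ?_⟩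
    · -- congruent to the identity
      intro δ _hδ
      rw [sconv_zero, sconv_zero, hD.1, hDs.1, one_mul, mul_one]
    · -- additive
      intro δ δ' _ _ α _
      calc sconv D (sconv (δ + δ') Ds) α
          = sconv D (fun β => sconv δ Ds β + sconv δ' Ds β) α := by
            rw [sconv_add_left]
        _ = sconv D (sconv δ Ds) α + sconv D (sconv δ' Ds) α :=
            congrFun (sconv_add_right D _ _) α
    · -- k-linear
      intro c δ _ α _
      rw [sconv_smulk_left c δ Ds, sconv_smulk_right c D (sconv δ Ds)]
    · -- automorphism
      intro δ _ α hα
      have hone : ∀ β ≤ α, sconv Ds D β = one' β :=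
        fun β hβ => hDsD β (hΔ.2 hα hβ)
      have hone' : ∀ β ≤ α, sconv D Ds β = one' β :=
        fun β hβ => hDDs β (hΔ.2 hα hβ)
      constructor
      · calc sconv Ds (sconv (sconv D (sconv δ Ds)) D) α
            = sconv (sconv Ds D) (sconv δ (sconv Ds D)) α := by
              rw [sconv_assoc D (sconv δ Ds) D, sconv_assoc δ Ds D,
                ← sconv_assoc Ds D (sconv δ (sconv Ds D))]
          _ = sconv δ (sconv Ds D) α := one'_sconv hone
          _ = δ α := sconv_one' hone
      · calc sconv D (sconv (sconv Ds (sconv δ D)) Ds) α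
            = sconv (sconv D Ds) (sconv δ (sconv D Ds)) α := by
              rw [sconv_assoc Ds (sconv δ D) Ds, sconv_assoc δ D Ds,
                ← sconv_assoc D Ds (sconv δ (sconv D Ds))]
          _ = sconv δ (sconv D Ds) α := one'_sconv hone'
          _ = δ α := sconv_one' hone'
    · -- Leibniz rule
      intro a δ _ α hα
      refine LinearMap.ext fun x => ?_
      show ev (sconv D (sconv (smul' a δ) Ds)) x α
        = ev (smul' (fapply D a) (sconv D (sconv δ Ds))) x α
      rw [ev_triple, ev_smul', ev_triple, fapply_smul']
      exact hs_fapply_mul hΔ hD.2 hα _ _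
    · -- group homomorphism
      intro E Es _ _ _ _ δ _ α _
      rw [sconv_assoc D E (sconv δ (sconv Es Ds)), sconv_assoc E (sconv δ Es) Ds,
        sconv_assoc δ Es Ds]
    · -- substitution maps
      intro q nab hnab φ hc f _hf e he
      exact part2g φ hΔ hnab hc D Ds f he

end HS
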